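/- arXiv:2602.22861 — 3 statements merged into one kernel-verified Lean document; each statement's English description precedes it below -/
import Mathlib

section
/- Let n be a natural number and let q be a real polynomial of degree at most n. Then for all real numbers a < b, the endpoint values of q are controlled by its L^2 norm on [a,b] with the explicit trace constant (n+1)^2: both (q(b))^2 ≤ ((n+1)^2/(b-a)) · ∫_a^b (q(x))^2 dx and (q(a))^2 ≤ ((n+1)^2/(b-a)) · ∫_a^b (q(x))^2 dx. -/
/-!
On polynomials of degree at most `n` with the `L²(0,1)` inner product, evaluation at `1` is
represented by a kernel `K` of degree at most `n`, so Cauchy–Schwarz gives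
`p(1)² ≤ ‖K‖² ‖p‖²` with `‖K‖² = K(1)`.

Writing `K = ∑ c_j x^j`, the reproducing property says `∑_j c_j / (m + j + 1) = 1` for
`m = 0, …, n`. This holds when `∑_j c_j / (z + j + 1) = 1 - N(z)/Q(z) = (Q - N)(z)/Q(z)` with
`N(z) = ∏ (z - j)` and `Q(z) = ∏ (z + j + 1)`: the `c_j` are the partial fraction coefficients
of `(Q - N)/Q`, given by Lagrange interpolation of `Q - N` at the poles `-(j+1)`, and
`K(1) = ∑ c_j` is the `zⁿ`-coefficient of `Q - N`, that is `∑ (2j + 1) = (n + 1)²`.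
An affine change of variables carries `[0,1]` onto `[a,b]` in either orientation.
-/

open MeasureTheory Polynomial
open Finset Lagrange

theorem Finset.sum_range_two_mul_add_one (n : ℕ) :
    ∑ j ∈ range n, (2 * (j : ℝ) + 1) = (n : ℝ) ^ 2 := by
  induction n with
  | zero => simp
  | succ n ih => rw [sum_range_succ, ih]; push_cast; ring

theorem Lagrange.coeff_nodal_card_sub_one {R ι : Type*} [CommRing R] [Nontrivial R]
    {s : Finset ι} (hs : s.Nonempty) (v : ι → R) :
    (nodal s v).coeff (#s - 1) = -∑ i ∈ s, v i := by
  have hpos : 0 < (nodal s v).natDegree := by rw [natDegree_nodal]; exact hs.card_pos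
  rw [← natDegree_nodal (s := s) (v := v), ← nextCoeff_of_natDegree_pos hpos, nodal,
    prod_X_sub_C_nextCoeff]

theorem intervalIntegral.sq_integral_mul_le {f g : ℝ → ℝ} {a b : ℝ} (hab : a ≤ b)
    (hf : Continuous f) (hg : Continuous g) :
    (∫ x in a..b, f x * g x) ^ 2 ≤ (∫ x in a..b, f x ^ 2) * ∫ x in a..b, g x ^ 2 := by
  have hquad : ∀ t : ℝ, 0 ≤ (∫ x in a..b, g x ^ 2) * (t * t) + 2 * (∫ x in a..b, f x * g x) * t
      + ∫ x in a..b, f x ^ 2 := fun t => by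
    have h := integral_nonneg (μ := volume) hab fun x _ => sq_nonneg (f x + t * g x)
    have hexp : ∀ x, (f x + t * g x) ^ 2 = f x ^ 2 + (2 * t) * (f x * g x) + (t * t) * g x ^ 2 :=
      fun x => by ring
    simp only [hexp] at h
    rw [integral_add ((by fun_prop : Continuous _).intervalIntegrable _ _)
        ((by fun_prop : Continuous _).intervalIntegrable _ _),
      integral_add ((by fun_prop : Continuous _).intervalIntegrable _ _)
        ((by fun_prop : Continuous _).intervalIntegrable _ _),
      integral_const_mul, integral_const_mul] at h
    linarith
  have h := discrim_le_zero hquad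
  rw [discrim] at h
  nlinarith

def traceKernelPole (j : ℕ) : ℝ := -((j : ℝ) + 1)

noncomputable def traceKernelNumerator (n : ℕ) : ℝ[X] :=
  nodal (range (n + 1)) traceKernelPole - nodal (range (n + 1)) (fun j : ℕ => (j : ℝ))

noncomputable def traceKernelCoeff (n j : ℕ) : ℝ :=
  (traceKernelNumerator n).eval (traceKernelPole j) * nodalWeight (range (n + 1)) traceKernelPole j

noncomputable def traceKernel (n : ℕ) : ℝ[X] :=
  ∑ j ∈ range (n + 1), C (traceKernelCoeff n j) * X ^ j

theorem traceKernelPole_injective : Function.Injective traceKernelPole := by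
  intro i j h
  simpa [traceKernelPole] using h

theorem degree_traceKernelNumerator_lt (n : ℕ) :
    (traceKernelNumerator n).degree < #(range (n + 1)) := by
  have hdeg : (nodal (range (n + 1)) traceKernelPole).degree = #(range (n + 1)) := degree_nodal
  rw [← hdeg]
  exact degree_sub_lt_left (by rw [hdeg, degree_nodal]) nodal_ne_zero
    (by rw [nodal_monic.leadingCoeff, nodal_monic.leadingCoeff])

theorem coeff_traceKernelNumerator (n : ℕ) :
    (traceKernelNumerator n).coeff n = ((n : ℝ) + 1) ^ 2 := by
  have hs : (range (n + 1)).Nonempty := nonempty_range_add_one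
  have hQ := coeff_nodal_card_sub_one hs traceKernelPole
  have hN := coeff_nodal_card_sub_one hs (fun j : ℕ => (j : ℝ))
  simp only [card_range, add_tsub_cancel_right] at hQ hN
  have hsq : ((n : ℝ) + 1) ^ 2 = ((n + 1 : ℕ) : ℝ) ^ 2 := by push_cast; ring
  rw [traceKernelNumerator, coeff_sub, hQ, hN, hsq, ← sum_range_two_mul_add_one,
    sub_neg_eq_add, ← sum_neg_distrib, ← sum_add_distrib]
  exact sum_congr rfl fun j _ => by rw [traceKernelPole]; ring

theorem sum_traceKernelCoeff (n : ℕ) :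
    ∑ j ∈ range (n + 1), traceKernelCoeff n j = ((n : ℝ) + 1) ^ 2 := by
  have h := coeff_eq_sum traceKernelPole_injective.injOn (degree_traceKernelNumerator_lt n)
  rw [card_range, add_tsub_cancel_right, coeff_traceKernelNumerator] at h
  rw [h]
  refine sum_congr rfl fun j _ => ?_
  rw [traceKernelCoeff, nodalWeight, prod_inv_distrib, div_eq_mul_inv]

theorem sum_traceKernelCoeff_div {n m : ℕ} (hm : m ≤ n) :
    ∑ j ∈ range (n + 1), traceKernelCoeff n j / ((m : ℝ) + j + 1) = 1 := by
  set s := range (n + 1)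
  have hx : ∀ j ∈ s, (m : ℝ) ≠ traceKernelPole j := fun j _ => by
    rw [traceKernelPole]
    intro h
    linarith [(m.cast_nonneg : (0 : ℝ) ≤ m), (j.cast_nonneg : (0 : ℝ) ≤ j)]
  have hQ : (nodal s traceKernelPole).eval (m : ℝ) ≠ 0 := eval_nodal_not_at_node hx
  have hN : (nodal s (fun j : ℕ => (j : ℝ))).eval (m : ℝ) = 0 :=
    eval_nodal_at_node (v := fun j : ℕ => (j : ℝ)) (mem_range.mpr (Nat.lt_succ_of_le hm))
  have hP : (traceKernelNumerator n).eval (m : ℝ) = (nodal s traceKernelPole).eval (m : ℝ) * 1 := by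
    rw [traceKernelNumerator, eval_sub, hN, sub_zero, mul_one]
  have h := congrArg (eval (m : ℝ))
    (eq_interpolate traceKernelPole_injective.injOn (degree_traceKernelNumerator_lt n))
  rw [eval_interpolate_not_at_node _ hx, hP] at h
  refine Eq.trans (sum_congr rfl fun j _ => ?_) (mul_left_cancel₀ hQ h).symm
  rw [traceKernelCoeff, traceKernelPole]
  ring

theorem natDegree_traceKernel_le (n : ℕ) : (traceKernel n).natDegree ≤ n :=
  natDegree_sum_le_of_forall_le _ _ fun _ hj =>
    (natDegree_C_mul_X_pow_le _ _).trans (Nat.le_of_lt_succ (mem_range.mp hj))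

theorem eval_one_traceKernel (n : ℕ) : (traceKernel n).eval 1 = ((n : ℝ) + 1) ^ 2 := by
  simp [traceKernel, eval_finsetSum, sum_traceKernelCoeff]

theorem integral_pow_mul_traceKernel {n m : ℕ} (hm : m ≤ n) :
    ∫ x in (0 : ℝ)..1, x ^ m * (traceKernel n).eval x = 1 := by
  simp only [traceKernel, eval_finsetSum, eval_mul, eval_C, eval_pow, eval_X, mul_sum]
  rw [intervalIntegral.integral_finsetSum fun j _ =>
    (by fun_prop : Continuous _).intervalIntegrable _ _]
  refine Eq.trans (sum_congr rfl fun j _ => ?_) (sum_traceKernelCoeff_div hm)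
  simp only [mul_left_comm _ (traceKernelCoeff n j), ← pow_add, intervalIntegral.integral_const_mul,
    integral_pow]
  push_cast
  ring

theorem integral_mul_traceKernel (n : ℕ) {p : ℝ[X]} (hp : p.natDegree ≤ n) :
    ∫ x in (0 : ℝ)..1, p.eval x * (traceKernel n).eval x = p.eval 1 := by
  have hsum : ∀ x, p.eval x = ∑ m ∈ range (n + 1), p.coeff m * x ^ m :=
    eval_eq_sum_range' (Nat.lt_succ_of_le hp)
  simp only [hsum, sum_mul, mul_assoc]
  rw [intervalIntegral.integral_finsetSum fun m _ =>
    (by fun_prop : Continuous _).intervalIntegrable _ _]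
  refine sum_congr rfl fun m hm => ?_
  rw [intervalIntegral.integral_const_mul,
    integral_pow_mul_traceKernel (Nat.le_of_lt_succ (mem_range.mp hm)), one_pow]

theorem integral_sq_traceKernel (n : ℕ) :
    ∫ x in (0 : ℝ)..1, (traceKernel n).eval x ^ 2 = ((n : ℝ) + 1) ^ 2 := by
  simp only [sq, integral_mul_traceKernel n (natDegree_traceKernel_le n), eval_one_traceKernel]

theorem sq_eval_one_le {n : ℕ} {p : ℝ[X]} (hp : p.natDegree ≤ n) :
    p.eval 1 ^ 2 ≤ ((n : ℝ) + 1) ^ 2 * ∫ x in (0 : ℝ)..1, p.eval x ^ 2 := by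
  calc p.eval 1 ^ 2 = (∫ x in (0 : ℝ)..1, p.eval x * (traceKernel n).eval x) ^ 2 := by
        rw [integral_mul_traceKernel n hp]
    _ ≤ (∫ x in (0 : ℝ)..1, p.eval x ^ 2) * ∫ x in (0 : ℝ)..1, (traceKernel n).eval x ^ 2 :=
        intervalIntegral.sq_integral_mul_le zero_le_one p.continuous (traceKernel n).continuous
    _ = ((n : ℝ) + 1) ^ 2 * ∫ x in (0 : ℝ)..1, p.eval x ^ 2 := by
        rw [integral_sq_traceKernel, mul_comm]

theorem sq_eval_le_of_ne {n : ℕ} {q : ℝ[X]} (hq : q.natDegree ≤ n) {a b : ℝ} (hab : a ≠ b) :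
    q.eval b ^ 2 ≤ ((n : ℝ) + 1) ^ 2 / (b - a) * ∫ x in a..b, q.eval x ^ 2 := by
  have hba : b - a ≠ 0 := sub_ne_zero.mpr hab.symm
  set p := q.comp (C (b - a) * X + C a)
  have hp : p.natDegree ≤ n :=
    natDegree_comp_le.trans ((Nat.mul_le_mul hq natDegree_linear_le).trans_eq (mul_one n))
  have heval : ∀ x, p.eval x = q.eval ((b - a) * x + a) := fun x => by simp [p]
  have hint : ∫ x in (0 : ℝ)..1, p.eval x ^ 2 = (b - a)⁻¹ * ∫ x in a..b, q.eval x ^ 2 := by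
    simpa [heval] using intervalIntegral.integral_comp_mul_add (fun y => q.eval y ^ 2) hba a
      (a := 0) (b := 1)
  have h := sq_eval_one_le hp
  rwa [hint, heval, mul_one, sub_add_cancel, ← mul_assoc, ← div_eq_mul_inv] at h

/-- One-dimensional discrete trace inequality for polynomials: for a real
polynomial `q` of degree at most `n` and an interval `[a,b]`, the squared
endpoint values of `q` are bounded by `(n+1)^2/(b-a)` times the `L²` norm of
`q` on `[a,b]`. -/
theorem polynomial_trace_inequality (n : ℕ) (q : Polynomial ℝ)
    (hq : q.degree ≤ (n : ℕ∞)) :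
    ∀ a b : ℝ, a < b →
      (q.eval b) ^ 2 ≤ (((n : ℝ) + 1) ^ 2 / (b - a)) * ∫ x in a..b, (q.eval x) ^ 2 ∧
      (q.eval a) ^ 2 ≤ (((n : ℝ) + 1) ^ 2 / (b - a)) * ∫ x in a..b, (q.eval x) ^ 2 := by
  intro a b hab
  have hn : q.natDegree ≤ n := natDegree_le_iff_degree_le.mpr hq
  refine ⟨sq_eval_le_of_ne hn hab.ne, ?_⟩
  have h := sq_eval_le_of_ne hn hab.ne'
  rwa [intervalIntegral.integral_symm, mul_neg, ← neg_mul, ← div_neg, neg_sub] at h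
end

section
/- Let (Ω, μ) be a probability measure space and let u : Ω → ℝ be a bounded measurable function with mean m = ∫ u dμ satisfying |m| ≤ 1. Let M∞ be the essential supremum of |u - m| and assume M∞ > 0. Define the scaling factor θ = min(1, (1 - |m|)/M∞) and the limited function ũ = θ(u - m) + m. Then: (i) |ũ(x)| ≤ 1 for μ-almost every x (the limited function satisfies the discrete maximum principle with bound 1), and (ii) ∫ ũ dμ = m (the limiter preserves the mean, hence the mass). -/
/-!
Let `v = u - m`, so that `|v| ≤ M∞` almost everywhere by definition of the essential supremum.
The factor `θ` is chosen so that `θ M∞ ≤ 1 - |m|`, whence `|θ v + m| ≤ θ |v| + |m| ≤ 1`.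
Mass is preserved because `v` has mean zero, so the rescaling does not move the mean.
-/

open MeasureTheory

-- For `M = 0` we have `v = 0`, and the junk value `(1 - |m|) / 0 = 0` is harmless.
theorem abs_min_one_div_mul_add_le_one {m M v : ℝ} (hm : |m| ≤ 1) (hv : |v| ≤ M) :
    |min 1 ((1 - |m|) / M) * v + m| ≤ 1 := by
  set θ := min 1 ((1 - |m|) / M)
  have hM_nonneg : 0 ≤ M := (abs_nonneg v).trans hv
  have hθ_nonneg : 0 ≤ θ := le_min zero_le_one (div_nonneg (by linarith) hM_nonneg)
  have hθv : θ * |v| ≤ 1 - |m| := by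
    rcases hM_nonneg.eq_or_lt with hM | hM
    · rw [le_antisymm (hM ▸ hv) (abs_nonneg v), mul_zero]
      linarith
    · calc θ * |v| ≤ (1 - |m|) / M * M := mul_le_mul (min_le_right _ _) hv (abs_nonneg v)
            (div_nonneg (by linarith) hM.le)
        _ = 1 - |m| := div_mul_cancel₀ _ hM.ne'
  calc |θ * v + m| ≤ |θ * v| + |m| := abs_add_le _ _
    _ = θ * |v| + |m| := by rw [abs_mul, abs_of_nonneg hθ_nonneg]
    _ ≤ 1 := by linarith

theorem integral_mul_sub_integral_add_integral {Ω : Type*} [MeasurableSpace Ω] {μ : Measure Ω}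
    [IsProbabilityMeasure μ] {u : Ω → ℝ} (hu : Integrable u μ) (θ : ℝ) :
    ∫ x, θ * (u x - ∫ y, u y ∂μ) + ∫ y, u y ∂μ ∂μ = ∫ y, u y ∂μ := by
  have h_centered : Integrable (fun x => θ * (u x - ∫ y, u y ∂μ)) μ :=
    (hu.sub (integrable_const _)).const_mul θ
  rw [integral_add h_centered (integrable_const _), integral_const_mul,
    integral_sub hu (integrable_const _)]
  simp

theorem zhang_shu_limiter_general {Ω : Type*} [MeasurableSpace Ω] (μ : Measure Ω)
    [IsProbabilityMeasure μ] (u : Ω → ℝ) (hmeas : Measurable u) (C : ℝ)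
    (hbdd : ∀ x, |u x| ≤ C) (m : ℝ) (hm : m = ∫ x, u x ∂μ) (hm1 : |m| ≤ 1)
    (Minf : ℝ) (hM : Minf = essSup (fun x => |u x - m|) μ)
    (θ : ℝ) (hθ : θ = min 1 ((1 - |m|) / Minf))
    (utilde : Ω → ℝ) (hu : utilde = fun x => θ * (u x - m) + m) :
    (∀ᵐ x ∂μ, |utilde x| ≤ 1) ∧ (∫ x, utilde x ∂μ) = m := by
  subst hu hθ
  have h_ae_le : ∀ᵐ x ∂μ, |u x - m| ≤ Minf :=
    hM ▸ ae_le_essSup (Filter.isBoundedUnder_of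
      ⟨C + |m|, fun x => (abs_sub (u x) m).trans (add_le_add_left (hbdd x) _)⟩)
  have h_int : Integrable u μ :=
    .of_bound hmeas.aestronglyMeasurable C (.of_forall hbdd)
  refine ⟨h_ae_le.mono fun x hx => abs_min_one_div_mul_add_le_one hm1 hx, ?_⟩
  subst hm
  exact integral_mul_sub_integral_add_integral h_int _

/-- The Zhang–Shu scaling limiter: on a probability space, rescaling a bounded
measurable function `u` toward its mean `m` (with `|m| ≤ 1`) by the factor
`θ = min 1 ((1 - |m|)/M∞)`, where `M∞ = essSup |u - m|`, produces a function
`ũ = θ(u - m) + m` that is bounded by `1` almost everywhere and has the same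
mean. -/
theorem zhang_shu_limiter {Ω : Type*} [MeasurableSpace Ω] (μ : Measure Ω)
    [IsProbabilityMeasure μ] (u : Ω → ℝ) (hmeas : Measurable u) (C : ℝ)
    (hbdd : ∀ x, |u x| ≤ C) (m : ℝ) (hm : m = ∫ x, u x ∂μ) (hm1 : |m| ≤ 1)
    (Minf : ℝ) (hM : Minf = essSup (fun x => |u x - m|) μ) (hMpos : 0 < Minf)
    (θ : ℝ) (hθ : θ = min 1 ((1 - |m|) / Minf))
    (utilde : Ω → ℝ) (hu : utilde = fun x => θ * (u x - m) + m) :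
    (∀ᵐ x ∂μ, |utilde x| ≤ 1) ∧ (∫ x, utilde x ∂μ) = m :=
  zhang_shu_limiter_general μ u hmeas C hbdd m hm hm1 Minf hM θ hθ utilde hu
end

section
/- Let n ≥ 1 be a natural number, let a < b < c be real numbers, and let p, q be real polynomials of degree at most n on the elements [a,b] and [b,c] respectively. Let m⁺, m⁻ > 0 be the (constant) one-sided mobility values, ⟨⟨m⟩⟩ = 2m⁺m⁻/(m⁺+m⁻) the harmonic average, h = 2(b-a)(c-b)/((b-a)+(c-b)) the face width, J = p(b) - q(b) the jump, and A = (p'(b)+q'(b))/2 the average normal derivative. Define the two-element SWIP form b := m⁺ ∫_a^b (p'(x))² dx + m⁻ ∫_b^c (q'(x))² dx + (η ⟨⟨m⟩⟩ / h) J² - 2 ⟨⟨m⟩⟩ A J. Then for every penalty parameter η ≥ 8n², coercivity holds: b ≥ (1/2) ( m⁺ ∫_a^b (p'(x))² dx + m⁻ ∫_b^c (q'(x))² dx + (η ⟨⟨m⟩⟩ / h) J² ). -/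
open MeasureTheory Polynomial

/-!
Everything rests on the sharp inverse trace inequality `r(b)² ≤ (k+1)²/(b-a) ∫ₐᵇ r²` for
polynomials of degree `≤ k`. On `[0,1]` it comes from the shifted Legendre polynomials `Pⱼ`:
`Q = Pₖ + Pₖ₊₁` vanishes at `1`, equals `2` at `0` and is orthogonal to `r'`, so integrating by
parts gives `2 r(0) = -∫₀¹ r Q'`. Applied to `r = Q'` this shows `∫₀¹ Q'² = -2 Q'(0) = 4(k+1)²`,
and Cauchy–Schwarz against `Q'` gives the inequality; an affine substitution moves it to any
interval and either endpoint.

For the form itself, each half `⟨⟨m⟩⟩ A± J` of the consistency term is absorbed by Young's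
inequality into half of `m± ∫ (υ')²` and a quarter of the penalty, using `⟨⟨m⟩⟩ ≤ 2 m±`,
`h ≤ 2 |K±|` and the trace inequality with `k + 1 = n`; `η ≥ 8 n²` is exactly what this needs.
-/

theorem sq_intervalIntegral_mul_le {f g : ℝ → ℝ} (hf : Continuous f) (hg : Continuous g)
    {u v : ℝ} (huv : u ≤ v) :
    (∫ x in u..v, f x * g x) ^ 2 ≤ (∫ x in u..v, f x ^ 2) * ∫ x in u..v, g x ^ 2 := by
  have hquad : ∀ t : ℝ, 0 ≤ (∫ x in u..v, f x ^ 2) * (t * t)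
      + 2 * (∫ x in u..v, f x * g x) * t + ∫ x in u..v, g x ^ 2 := by
    intro t
    calc 0 ≤ ∫ x in u..v, (t * f x + g x) ^ 2 :=
          intervalIntegral.integral_nonneg huv fun x _ => sq_nonneg _
      _ = ∫ x in u..v, (t ^ 2 * f x ^ 2 + 2 * t * (f x * g x) + g x ^ 2) := by
          congr 1; ext x; ring
      _ = _ := by
          rw [intervalIntegral.integral_add, intervalIntegral.integral_add,
            intervalIntegral.integral_const_mul, intervalIntegral.integral_const_mul]
          · ring
          all_goals exact (by fun_prop : Continuous _).intervalIntegrable _ _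
  have hdiscr := discrim_le_zero hquad
  rw [discrim] at hdiscr
  nlinarith

namespace Polynomial

theorem isRoot_iterate_derivative_of_pow_dvd {R : Type*} [CommRing R] {p : R[X]} {t : R}
    {n j : ℕ} (h : (X - C t) ^ n ∣ p) (hj : j < n) : (derivative^[j] p).IsRoot t :=
  dvd_iff_isRoot.mp <| (dvd_pow_self _ (by omega)).trans
    (pow_sub_dvd_iterate_derivative_of_pow_dvd j h)

theorem integral_eval_mul_derivative (s w : ℝ[X]) (u v : ℝ) :
    ∫ x in u..v, s.eval x * (derivative w).eval x =
      s.eval v * w.eval v - s.eval u * w.eval u - ∫ x in u..v, (derivative s).eval x * w.eval x :=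
  intervalIntegral.integral_mul_deriv_eq_deriv_mul (fun x _ => s.hasDerivAt x)
    (fun x _ => w.hasDerivAt x) (s.derivative.continuous.intervalIntegrable _ _)
    (w.derivative.continuous.intervalIntegrable _ _)

theorem integral_eval_mul_iterate_derivative_eq_zero {u v : ℝ} {w : ℝ[X]} {n : ℕ}
    (hu : ∀ j < n, (derivative^[j] w).IsRoot u) (hv : ∀ j < n, (derivative^[j] w).IsRoot v)
    {s : ℝ[X]} (hs : derivative^[n] s = 0) :
    ∫ x in u..v, s.eval x * (derivative^[n] w).eval x = 0 := by
  induction n generalizing s with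
  | zero => simp [show s = 0 from hs]
  | succ n ih =>
    rw [Function.iterate_succ_apply', integral_eval_mul_derivative, (hu n n.lt_succ_self).eq_zero,
      (hv n n.lt_succ_self).eq_zero, ih (fun j hj => hu j (by omega)) (fun j hj => hv j (by omega))
        (by rwa [← Function.iterate_succ_apply])]
    ring

noncomputable def shiftedLegendreReal (n : ℕ) : ℝ[X] := (shiftedLegendre n).map (algebraMap ℤ ℝ)

namespace shiftedLegendreReal

theorem factorial_mul_eq (n : ℕ) :
    (n.factorial : ℝ[X]) * shiftedLegendreReal n = derivative^[n] (X ^ n * (1 - X) ^ n) := by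
  have h := congrArg (map (algebraMap ℤ ℝ)) (factorial_mul_shiftedLegendre_eq n)
  rw [← iterate_derivative_map] at h
  simpa [shiftedLegendreReal] using h

theorem eval_eq_aeval (n : ℕ) (x : ℝ) :
    (shiftedLegendreReal n).eval x = aeval x (shiftedLegendre n) :=
  eval_map_algebraMap _ _

theorem eval_zero (n : ℕ) : (shiftedLegendreReal n).eval 0 = 1 := by
  simp [shiftedLegendreReal, ← coeff_zero_eq_eval_zero, coeff_shiftedLegendre]

theorem eval_one (n : ℕ) : (shiftedLegendreReal n).eval 1 = (-1) ^ n := by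
  rw [eval_eq_aeval, shiftedLegendre_eval_symm, sub_self, ← eval_eq_aeval, eval_zero, mul_one]

theorem eval_derivative_zero (n : ℕ) :
    (derivative (shiftedLegendreReal n)).eval 0 = -(n * (n + 1)) := by
  simp [shiftedLegendreReal, ← coeff_zero_eq_eval_zero, coeff_derivative, coeff_shiftedLegendre,
    Nat.choose_succ_self_right]

theorem natDegree_eq (n : ℕ) : (shiftedLegendreReal n).natDegree = n := by
  rw [shiftedLegendreReal, natDegree_map_eq_of_injective (RingHom.injective_int _),
    natDegree_shiftedLegendre]

theorem integral_eval_mul_eq_zero {n : ℕ} {s : ℝ[X]} (hs : derivative^[n] s = 0) :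
    ∫ x in (0 : ℝ)..1, s.eval x * (shiftedLegendreReal n).eval x = 0 := by
  have hrodrigues : ∀ x, (n.factorial : ℝ) * (shiftedLegendreReal n).eval x
      = (derivative^[n] (X ^ n * (1 - X) ^ n : ℝ[X])).eval x := fun x => by
    rw [← factorial_mul_eq, eval_mul, eval_natCast]
  have hdvd : ∀ t : ℝ, t = 0 ∨ t = 1 → (X - C t) ^ n ∣ (X ^ n * (1 - X) ^ n : ℝ[X]) := by
    rintro t (rfl | rfl)
    · simp
    · exact Dvd.dvd.mul_left (pow_dvd_pow_of_dvd ⟨-1, by simp⟩ n) _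
  have h := integral_eval_mul_iterate_derivative_eq_zero (u := 0) (v := 1)
    (fun j hj => isRoot_iterate_derivative_of_pow_dvd (hdvd 0 (.inl rfl)) hj)
    (fun j hj => isRoot_iterate_derivative_of_pow_dvd (hdvd 1 (.inr rfl)) hj) hs
  simp_rw [← hrodrigues, mul_left_comm _ (n.factorial : ℝ), intervalIntegral.integral_const_mul] at h
  exact (mul_eq_zero.mp h).resolve_left (by positivity)

theorem integral_eval_mul_derivative_add_succ {k : ℕ} {r : ℝ[X]} (hr : r.natDegree ≤ k) :
    ∫ x in (0 : ℝ)..1, r.eval x *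
      (derivative (shiftedLegendreReal k + shiftedLegendreReal (k + 1))).eval x =
        -2 * r.eval 0 := by
  have hk : derivative^[k] (derivative r) = 0 := by
    rw [← Function.iterate_succ_apply]; exact iterate_derivative_eq_zero (by omega)
  have hk_succ : derivative^[k + 1] (derivative r) = 0 := by
    rw [Function.iterate_succ_apply', hk, derivative_zero]
  have horth : ∫ x in (0 : ℝ)..1, (derivative r).eval x *
      (shiftedLegendreReal k + shiftedLegendreReal (k + 1)).eval x = 0 := by
    simp_rw [eval_add, mul_add]
    rw [intervalIntegral.integral_add ((by fun_prop : Continuous _).intervalIntegrable _ _)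
      ((by fun_prop : Continuous _).intervalIntegrable _ _), integral_eval_mul_eq_zero hk,
      integral_eval_mul_eq_zero hk_succ, add_zero]
  rw [integral_eval_mul_derivative, horth, eval_add, eval_add, eval_one, eval_one, eval_zero,
    eval_zero, pow_succ]
  ring

end shiftedLegendreReal

open shiftedLegendreReal in
theorem sq_eval_zero_le_integral {k : ℕ} {r : ℝ[X]} (hr : r.natDegree ≤ k) :
    r.eval 0 ^ 2 ≤ ((k : ℝ) + 1) ^ 2 * ∫ x in (0 : ℝ)..1, r.eval x ^ 2 := by
  set D := derivative (shiftedLegendreReal k + shiftedLegendreReal (k + 1)) with hD_def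
  have hD : D.natDegree ≤ k := by
    refine (natDegree_derivative_le _).trans (Nat.sub_le_of_le_add ?_)
    refine (natDegree_add_le _ _).trans ?_
    simp [natDegree_eq]
  have hDD : ∫ x in (0 : ℝ)..1, D.eval x ^ 2 = 4 * ((k : ℝ) + 1) ^ 2 := by
    calc ∫ x in (0 : ℝ)..1, D.eval x ^ 2 = ∫ x in (0 : ℝ)..1, D.eval x * D.eval x := by
          simp_rw [sq]
      _ = -2 * D.eval 0 := integral_eval_mul_derivative_add_succ hD
      _ = 4 * ((k : ℝ) + 1) ^ 2 := by
          rw [hD_def, derivative_add, eval_add, eval_derivative_zero, eval_derivative_zero]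
          push_cast; ring
  have hcs := sq_intervalIntegral_mul_le r.continuous D.continuous zero_le_one
  rw [integral_eval_mul_derivative_add_succ hr, hDD] at hcs
  nlinarith

theorem sq_eval_le_mul_inv_mul_integral {k : ℕ} {r : ℝ[X]} (hr : r.natDegree ≤ k) {u v : ℝ}
    (huv : u ≠ v) :
    r.eval u ^ 2 ≤ ((k : ℝ) + 1) ^ 2 * ((v - u)⁻¹ * ∫ x in u..v, r.eval x ^ 2) := by
  have hvu : v - u ≠ 0 := sub_ne_zero.mpr huv.symm
  have hs : (r.comp (C u + C (v - u) * X)).natDegree ≤ k := by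
    rw [natDegree_comp]
    calc r.natDegree * (C u + C (v - u) * X).natDegree ≤ r.natDegree * 1 := by
          gcongr; compute_degree!
      _ ≤ k := by omega
  have h := sq_eval_zero_le_integral hs
  simp only [eval_comp, eval_add, eval_mul, eval_C, eval_X, mul_zero, add_zero] at h
  rwa [intervalIntegral.integral_comp_add_mul (fun x => r.eval x ^ 2) hvu, mul_zero, add_zero,
    mul_one, add_sub_cancel, smul_eq_mul] at h

end Polynomial

theorem two_mul_mul_div_add_le_two_mul_left {x y : ℝ} (hx : 0 ≤ x) (hy : 0 ≤ y) :
    2 * x * y / (x + y) ≤ 2 * x :=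
  div_le_of_le_mul₀ (by positivity) (by positivity) (by nlinarith)

theorem two_mul_mul_div_add_le_two_mul_right {x y : ℝ} (hx : 0 ≤ x) (hy : 0 ≤ y) :
    2 * x * y / (x + y) ≤ 2 * y :=
  div_le_of_le_mul₀ (by positivity) (by positivity) (by nlinarith)

theorem four_mul_mul_le_div_mul {N η μ H α : ℝ} (hN : 0 ≤ N) (hη : 8 * N ≤ η) (hμ : 0 ≤ μ)
    (hH : 0 < H) (hHα : H ≤ 2 * α) : 4 * N * μ ≤ η * μ / H * α := by
  rw [div_mul_eq_mul_div, le_div_iff₀ hH]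
  nlinarith [mul_le_mul_of_nonneg_left hHα (mul_nonneg (by linarith : 0 ≤ η) hμ),
    mul_nonneg (sub_nonneg.2 hη) (mul_nonneg hμ hH.le)]

theorem mul_mul_le_of_sq_le {m α I μ σ N P J : ℝ} (hN : 0 < N) (hα : 0 < α) (hμ : 0 ≤ μ)
    (hμm : μ ≤ 2 * m) (htrace : P ^ 2 ≤ N * (α⁻¹ * I)) (hσ : 4 * N * μ ≤ σ * α) :
    μ * P * J ≤ m * I / 2 + σ * J ^ 2 / 4 := by
  have hm : 0 ≤ m := by linarith
  have htrace' : P ^ 2 * α ≤ N * I := by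
    calc P ^ 2 * α ≤ N * (α⁻¹ * I) * α := by gcongr
      _ = N * I := by field_simp
  refine le_of_mul_le_mul_left ?_ (by positivity : 0 < 4 * N * α)
  calc 4 * N * α * (μ * P * J) ≤ μ * α * (P ^ 2 * α) + N * J ^ 2 * (4 * N * μ) := by
        nlinarith [mul_nonneg hμ (sq_nonneg (α * P - 2 * N * J))]
    _ ≤ 2 * m * α * (N * I) + N * J ^ 2 * (σ * α) := by gcongr
    _ = 4 * N * α * (m * I / 2 + σ * J ^ 2 / 4) := by ring

/-- One-dimensional two-element coercivity of the SWIP form: for polynomials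
`p`, `q` of degree at most `n ≥ 1` on the elements `[a,b]`, `[b,c]` with
positive mobilities `m⁺`, `m⁻`, harmonic average `⟨⟨m⟩⟩`, face width `h`,
jump `J` and average derivative `A`, the form
`b = m⁺∫(p')² + m⁻∫(q')² + (η⟨⟨m⟩⟩/h)J² - 2⟨⟨m⟩⟩AJ` is bounded below by one
half of the squared DG semi-norm whenever `η ≥ 8n²`. -/
theorem swip_two_element_coercivity (n : ℕ) (hn : 1 ≤ n) (a b c : ℝ)
    (hab : a < b) (hbc : b < c)
    (p q : Polynomial ℝ) (hp : p.degree ≤ (n : ℕ∞)) (hq : q.degree ≤ (n : ℕ∞))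
    (mp mm : ℝ) (hmp : 0 < mp) (hmm : 0 < mm)
    (η : ℝ) (hη : 8 * (n : ℝ) ^ 2 ≤ η) :
    (1 / 2) * (mp * (∫ x in a..b, (p.derivative.eval x) ^ 2)
        + mm * (∫ x in b..c, (q.derivative.eval x) ^ 2)
        + (η * (2 * mp * mm / (mp + mm)) / (2 * (b - a) * (c - b) / ((b - a) + (c - b))))
            * (p.eval b - q.eval b) ^ 2) ≤
      mp * (∫ x in a..b, (p.derivative.eval x) ^ 2)
        + mm * (∫ x in b..c, (q.derivative.eval x) ^ 2)
        + (η * (2 * mp * mm / (mp + mm)) / (2 * (b - a) * (c - b) / ((b - a) + (c - b))))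
            * (p.eval b - q.eval b) ^ 2
        - 2 * (2 * mp * mm / (mp + mm))
            * ((p.derivative.eval b + q.derivative.eval b) / 2)
            * (p.eval b - q.eval b) := by
  obtain ⟨k, rfl⟩ : ∃ k, n = k + 1 := ⟨n - 1, by omega⟩
  push_cast at hη
  have hdeg : ∀ r : ℝ[X], r.degree ≤ ((k + 1 : ℕ) : ℕ∞) → r.derivative.natDegree ≤ k :=
    fun r hr => (natDegree_derivative_le r).trans
      (by have := natDegree_le_iff_degree_le.mpr (by exact_mod_cast hr); omega)
  have htrace_p := sq_eval_le_mul_inv_mul_integral (hdeg p hp) hab.ne'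
  rw [intervalIntegral.integral_symm, mul_neg, ← neg_mul, ← inv_neg, neg_sub] at htrace_p
  have htrace_q := sq_eval_le_mul_inv_mul_integral (hdeg q hq) hbc.ne
  have hα : 0 < b - a := sub_pos.mpr hab
  have hβ : 0 < c - b := sub_pos.mpr hbc
  have hμ : 0 ≤ 2 * mp * mm / (mp + mm) := by positivity
  have hH : 0 < 2 * (b - a) * (c - b) / ((b - a) + (c - b)) := by positivity
  have young_p := mul_mul_le_of_sq_le (J := p.eval b - q.eval b) (by positivity) hα hμ
    (two_mul_mul_div_add_le_two_mul_left hmp.le hmm.le) htrace_p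
    (four_mul_mul_le_div_mul (by positivity) hη hμ hH
      (two_mul_mul_div_add_le_two_mul_left hα.le hβ.le))
  have young_q := mul_mul_le_of_sq_le (J := p.eval b - q.eval b) (by positivity) hβ hμ
    (two_mul_mul_div_add_le_two_mul_right hmp.le hmm.le) htrace_q
    (four_mul_mul_le_div_mul (by positivity) hη hμ hH
      (two_mul_mul_div_add_le_two_mul_right hα.le hβ.le))
  linarith
end
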